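/- Let $t$ and $n$ be nonnegative integers and let $\nu$ be a finite positive Borel measure on $\mathbb{C}$ whose support is contained in the annulus $A_n = \{ \zeta : 2^{-(n+1)} \leq |\zeta| \leq 2^{-n} \}$. Define $F(z) = \int \left( \frac{\zeta}{|\zeta|} \right)^{t+1} \frac{d\nu(\zeta)}{\zeta - z}$ for $z$ outside the support of $\nu$. Then $F^{(t)}(0)$ is a nonnegative real number and $F^{(t)}(0) \geq t! \, 2^{(t+1)n} \, \nu(\mathbb{C})$. -/

import Mathlib

open MeasureTheory

open Metric

lemma aux_hasDerivAt (ζ x : ℂ) (k : ℕ) (h : ζ - x ≠ 0) (c : ℂ) :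
    HasDerivAt (fun w => c * (k.factorial : ℂ) * ((ζ - w) ^ (k + 1))⁻¹)
      (c * ((k + 1).factorial : ℂ) * ((ζ - x) ^ (k + 2))⁻¹) x := by
  have h1 : HasDerivAt (fun w : ℂ => ζ - w) (-1) x := (hasDerivAt_id x).const_sub ζ
  have h2 := ((hasDerivAt_zpow (-(k + 1 : ℤ)) (ζ - x) (Or.inl h)).comp x h1).const_mul
    (c * (k.factorial : ℂ))
  have hz : ∀ w : ℂ, w ^ (-(k + 1 : ℤ)) = (w ^ (k + 1))⁻¹ := by
    intro w
    rw [zpow_neg]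
    norm_cast
  have hz2 : (ζ - x) ^ (-(k + 1 : ℤ) - 1) = ((ζ - x) ^ (k + 2))⁻¹ := by
    rw [show (-(k + 1 : ℤ) - 1) = -(k + 2 : ℤ) by ring, zpow_neg]
    norm_cast
  simp only [Function.comp, hz, hz2] at h2
  refine h2.congr_deriv ?_
  rw [Nat.factorial_succ]
  push_cast
  ring

/-- If `ν` is a finite positive Borel measure supported in the annulus
`Aₙ = {2^{-(n+1)} ≤ |ζ| ≤ 2^{-n}}` and
`F(z) = ∫ (ζ/|ζ|)^{t+1} (ζ - z)⁻¹ dν(ζ)`, then `F^{(t)}(0)` is a nonnegative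
real number and `F^{(t)}(0) ≥ t! ⬝ 2^{(t+1)n} ⬝ ν(ℂ)`. -/
theorem cauchy_transform_iteratedDeriv_lower_bound
    (t n : ℕ) (ν : Measure ℂ) [IsFiniteMeasure ν]
    (hsupp : ν {ζ : ℂ | (2 : ℝ) ^ (-(n + 1 : ℤ)) ≤ ‖ζ‖ ∧
      ‖ζ‖ ≤ (2 : ℝ) ^ (-(n : ℤ))}ᶜ = 0)
    (F : ℂ → ℂ)
    (hF : ∀ z, z ∉ {ζ : ℂ | (2 : ℝ) ^ (-(n + 1 : ℤ)) ≤ ‖ζ‖ ∧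
        ‖ζ‖ ≤ (2 : ℝ) ^ (-(n : ℤ))} →
      F z = ∫ ζ, (ζ / ((‖ζ‖ : ℝ) : ℂ)) ^ (t + 1) * (ζ - z)⁻¹ ∂ν) :
    (iteratedDeriv t F 0).im = 0 ∧ 0 ≤ (iteratedDeriv t F 0).re ∧
      (t.factorial : ℝ) * 2 ^ ((t + 1) * n) * (ν Set.univ).toReal ≤
        (iteratedDeriv t F 0).re := by
  set r : ℝ := (2 : ℝ) ^ (-(n + 1 : ℤ)) with hr
  set R : ℝ := (2 : ℝ) ^ (-(n : ℤ)) with hR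
  have hr0 : 0 < r := by positivity
  set c : ℂ → ℂ := fun ζ => (ζ / ((‖ζ‖ : ℝ) : ℂ)) ^ (t + 1) with hc
  have hcnorm : ∀ ζ, ‖c ζ‖ ≤ 1 := by
    intro ζ
    rcases eq_or_ne ζ 0 with h | h
    · simp [hc, h]
    · have : ‖ζ‖ ≠ 0 := by simpa using h
      simp [hc, norm_pow, norm_div, Complex.norm_real,
        abs_of_nonneg (norm_nonneg ζ), div_self this]
  have hcmeas : Measurable c := by
    apply Measurable.pow_const
    exact measurable_id.div ((Complex.continuous_ofReal.comp continuous_norm).measurable)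
  have hae : ∀ᵐ ζ ∂ν, r ≤ ‖ζ‖ ∧ ‖ζ‖ ≤ R := by
    rw [MeasureTheory.ae_iff]
    exact hsupp
  set G : ℕ → ℂ → ℂ := fun k z => ∫ ζ, c ζ * (k.factorial : ℂ) * ((ζ - z) ^ (k + 1))⁻¹ ∂ν
    with hG
  have meas_int : ∀ (k : ℕ) (z : ℂ),
      AEStronglyMeasurable (fun ζ => c ζ * (k.factorial : ℂ) * ((ζ - z) ^ (k + 1))⁻¹) ν := by
    intro k z
    exact ((hcmeas.mul_const _).mul
      (((measurable_id.sub_const z).pow_const _).inv)).aestronglyMeasurable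
  -- integrand bound
  have hbound : ∀ (k : ℕ) (δ : ℝ), 0 < δ → ∀ ζ x : ℂ, δ ≤ ‖ζ - x‖ →
      ‖c ζ * (k.factorial : ℂ) * ((ζ - x) ^ (k + 1))⁻¹‖ ≤ (k.factorial : ℝ) * (δ ^ (k + 1))⁻¹ := by
    intro k δ hδ ζ x hd
    rw [norm_mul, norm_mul]
    have e1 : ‖(k.factorial : ℂ)‖ = (k.factorial : ℝ) := by simp
    have e2 : ‖((ζ - x) ^ (k + 1))⁻¹‖ ≤ (δ ^ (k + 1))⁻¹ := by
      rw [norm_inv, norm_pow]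
      exact inv_anti₀ (by positivity) (pow_le_pow_left₀ hδ.le hd _)
    have h := mul_le_mul (mul_le_mul (hcnorm ζ) (le_of_eq e1) (norm_nonneg _) zero_le_one)
      e2 (norm_nonneg _) (by positivity)
    simpa using h
  have habsx : ∀ x : ℂ, ∀ ζ : ℂ, ‖ζ‖ - ‖x‖ ≤ ‖ζ - x‖ := by
    intro x ζ
    simpa using norm_sub_norm_le ζ x
  have hint : ∀ (k : ℕ) (z : ℂ), ‖z‖ < r →
      Integrable (fun ζ => c ζ * (k.factorial : ℂ) * ((ζ - z) ^ (k + 1))⁻¹) ν := by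
    intro k z hz
    refine (integrable_const ((k.factorial : ℝ) * ((r - ‖z‖) ^ (k + 1))⁻¹)).mono'
      (meas_int k z) ?_
    filter_upwards [hae] with ζ hζ
    refine hbound k _ (by linarith) ζ z ?_
    have := habsx z ζ
    linarith [hζ.1]
  have hderiv : ∀ (k : ℕ) (z : ℂ), z ∈ ball (0 : ℂ) r → HasDerivAt (G k) (G (k + 1) z) z := by
    intro k z hz
    have hzr : ‖z‖ < r := by simpa [Complex.dist_eq] using hz
    set δ := (r - ‖z‖) / 2 with hδdef
    have hδ : 0 < δ := by rw [hδdef]; linarith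
    have hdist : ∀ᵐ ζ ∂ν, ∀ x ∈ ball z δ, δ ≤ ‖ζ - x‖ := by
      filter_upwards [hae] with ζ hζ x hx
      have hxz : ‖x - z‖ < δ := by simpa [Complex.dist_eq] using hx
      have hxa : ‖x‖ < ‖z‖ + δ := by
        have h2 : ‖x‖ ≤ ‖x - z‖ + ‖z‖ := by
          simpa using norm_add_le (x - z) z
        linarith
      have h3 := habsx x ζ
      have heq : r - (‖z‖ + δ) = δ := by rw [hδdef]; ring
      linarith [hζ.1]
    have key := hasDerivAt_integral_of_dominated_loc_of_deriv_le (μ := ν)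
      (F := fun x ζ => c ζ * (k.factorial : ℂ) * ((ζ - x) ^ (k + 1))⁻¹)
      (F' := fun x ζ => c ζ * ((k + 1).factorial : ℂ) * ((ζ - x) ^ (k + 2))⁻¹)
      (x₀ := z) (bound := fun _ => ((k + 1).factorial : ℝ) * (δ ^ (k + 2))⁻¹)
      (ball_mem_nhds z hδ)
      (Filter.Eventually.of_forall fun x => meas_int k x)
      (hint k z hzr)
      (meas_int (k + 1) z)
      ?_ (integrable_const _) ?_
    · exact key.2
    · filter_upwards [hdist] with ζ hζ x hx
      exact hbound (k + 1) δ hδ ζ x (hζ x hx)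
    · filter_upwards [hdist] with ζ hζ x hx
      have hne : ζ - x ≠ 0 := by
        intro h0
        have := hζ x hx
        rw [h0] at this
        simp at this
        linarith
      exact aux_hasDerivAt ζ x k hne (c ζ)
  have hkey : ∀ (k : ℕ) (z : ℂ), z ∈ ball (0 : ℂ) r → iteratedDeriv k F z = G k z := by
    intro k
    induction k with
    | zero =>
      intro z hz
      have hzr : ‖z‖ < r := by simpa [Complex.dist_eq] using hz
      have hznot : z ∉ {ζ : ℂ | r ≤ ‖ζ‖ ∧ ‖ζ‖ ≤ R} :=
        fun h => absurd h.1 (not_le.2 hzr)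
      rw [iteratedDeriv_zero, hF z hznot]
      simp [hG, hc]
    | succ k ih =>
      intro z hz
      rw [iteratedDeriv_succ]
      have hev : iteratedDeriv k F =ᶠ[nhds z] G k :=
        Filter.eventuallyEq_of_mem (isOpen_ball.mem_nhds hz) ih
      rw [hev.deriv_eq, (hderiv k z hz).deriv]
  have h0mem : (0 : ℂ) ∈ ball (0 : ℂ) r := mem_ball_self hr0
  have hval : iteratedDeriv t F 0 =
      ((∫ ζ, (t.factorial : ℝ) * (‖ζ‖ ^ (t + 1))⁻¹ ∂ν : ℝ) : ℂ) := by
    rw [hkey t 0 h0mem]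
    show (∫ ζ, c ζ * (t.factorial : ℂ) * ((ζ - 0) ^ (t + 1))⁻¹ ∂ν) = _
    have hstep : (∫ ζ, c ζ * (t.factorial : ℂ) * ((ζ - 0) ^ (t + 1))⁻¹ ∂ν)
        = ∫ ζ, (((t.factorial : ℝ) * (‖ζ‖ ^ (t + 1))⁻¹ : ℝ) : ℂ) ∂ν := by
      apply integral_congr_ae
      filter_upwards [hae] with ζ hζ
      have hζ0 : ζ ≠ 0 := by
        intro h0
        rw [h0] at hζ
        simp at hζ
        linarith [hζ.1, hr0]
      have habs : (‖ζ‖ : ℂ) ≠ 0 := by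
        simpa using hζ0
      have hζne : ζ ^ (t + 1) ≠ 0 := pow_ne_zero _ hζ0
      simp only [hc, sub_zero]
      push_cast
      field_simp
      have h1 : (((‖ζ‖ : ℝ) : ℂ) * ((‖ζ‖ : ℝ) : ℂ)⁻¹) ^ (t + 1) = 1 := by
        rw [mul_inv_cancel₀ habs, one_pow]
      linear_combination (ζ * ζ ^ t * (t.factorial : ℂ)) * h1
    rw [hstep]
    exact integral_ofReal
  have hfint : Integrable (fun ζ => (t.factorial : ℝ) * (‖ζ‖ ^ (t + 1))⁻¹) ν := by
    refine (integrable_const ((t.factorial : ℝ) * ((r ^ (t + 1))⁻¹))).mono' ?_ ?_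
    · exact ((continuous_norm.measurable.pow_const _).inv.const_mul _).aestronglyMeasurable
    · filter_upwards [hae] with ζ hζ
      rw [Real.norm_of_nonneg (by positivity)]
      gcongr
      exact hζ.1
  have hRpos : 0 < R := by positivity
  have hRe : (R ^ (t + 1))⁻¹ = (2 : ℝ) ^ ((t + 1) * n) := by
    rw [hR, ← zpow_natCast ((2 : ℝ) ^ (-(n : ℤ))) (t + 1), ← zpow_mul, ← zpow_neg,
      ← zpow_natCast (2 : ℝ) ((t + 1) * n)]
    congr 1
    push_cast
    ring
  have hlow : (t.factorial : ℝ) * 2 ^ ((t + 1) * n) * (ν Set.univ).toReal ≤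
      ∫ ζ, (t.factorial : ℝ) * (‖ζ‖ ^ (t + 1))⁻¹ ∂ν := by
    have hconst : ∫ _ζ : ℂ, ((t.factorial : ℝ) * 2 ^ ((t + 1) * n)) ∂ν
        = (t.factorial : ℝ) * 2 ^ ((t + 1) * n) * (ν Set.univ).toReal := by
      rw [integral_const, smul_eq_mul, measureReal_def]
      ring
    rw [← hconst]
    apply integral_mono_ae (integrable_const _) hfint
    filter_upwards [hae] with ζ hζ
    have hζpos : 0 < ‖ζ‖ := lt_of_lt_of_le hr0 hζ.1
    have h1 : ‖ζ‖ ^ (t + 1) ≤ R ^ (t + 1) :=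
      pow_le_pow_left₀ (norm_nonneg ζ) hζ.2 _
    have h2 : (R ^ (t + 1))⁻¹ ≤ (‖ζ‖ ^ (t + 1))⁻¹ :=
      inv_anti₀ (by positivity) h1
    rw [← hRe]
    have := mul_le_mul_of_nonneg_left h2 (by positivity : (0:ℝ) ≤ (t.factorial : ℝ))
    exact this
  rw [hval]
  refine ⟨by simp, ?_, ?_⟩
  · simp only [Complex.ofReal_re]
    exact le_trans (by positivity) hlow
  · simpa using hlow
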